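/- For a ∈ (0, 1/2), the function m_a(φ) = (a 2^{a−1}/(√π |φ|^{1+2a})) Γ_L(1/2+a, φ²/2) + (a 2^{−a−1}/(√π |φ|^{1−2a})) Γ_U(1/2−a, φ²/2) satisfies m_a(φ) → ∞ as φ → 0 and |φ|^{1+2a} m_a(φ) → a 2^{a−1} Γ(1/2+a)/√π as |φ| → ∞. -/

import Mathlib

open Real MeasureTheory Filter

/-- Lower incomplete gamma function Γ_L(s,x) = ∫₀ˣ u^{s-1} e^{-u} du. -/
noncomputable def lowerGamma (s x : ℝ) : ℝ :=
  ∫ u in Set.Ioo (0:ℝ) x, u ^ (s - 1) * Real.exp (-u)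

/-- Upper incomplete gamma function Γ_U(s,x) = ∫ₓ^∞ u^{s-1} e^{-u} du. -/
noncomputable def upperGamma (s x : ℝ) : ℝ :=
  ∫ u in Set.Ioi x, u ^ (s - 1) * Real.exp (-u)

/-- The incomplete-gamma expression in the HTHS+ sandwich bounds. -/
noncomputable def mExpr (a φ : ℝ) : ℝ :=
  (a * 2 ^ (a - 1) / (Real.sqrt π * |φ| ^ (1 + 2*a))) * lowerGamma (1/2 + a) (φ^2 / 2)
    + (a * 2 ^ (-a - 1) / (Real.sqrt π * |φ| ^ (1 - 2*a))) * upperGamma (1/2 - a) (φ^2 / 2)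

/-!
Near the origin the `Γ_L` summand is nonnegative and `Γ_U(1/2 - a, φ²/2) ≥ Γ_U(1/2 - a, 1/2) > 0`,
so `m_a(φ)` dominates a positive multiple of `|φ|^{-(1-2a)}`, which blows up because `a < 1/2`.
At infinity, `|φ|^{1+2a} m_a(φ)` is `a 2^{a-1}/√π · Γ_L(1/2 + a, φ²/2)`, which tends to
`a 2^{a-1} Γ(1/2 + a)/√π`, plus a multiple of `|φ|^{4a} Γ_U(1/2 - a, φ²/2)`, which vanishes
because `Γ_U(s, x) ≤ e^{-x}` for `s ≤ 1 ≤ x`.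
-/

open Set Topology

section IncompleteGamma

variable {s : ℝ}

lemma integrableOn_gammaIntegrand_Ioi (hs : 0 < s) :
    IntegrableOn (fun u : ℝ => u ^ (s - 1) * exp (-u)) (Ioi 0) :=
  (GammaIntegral_convergent hs).congr_fun (fun _ _ => mul_comm _ _) measurableSet_Ioi

lemma gammaIntegrand_nonneg {u : ℝ} (hu : 0 ≤ u) : 0 ≤ u ^ (s - 1) * exp (-u) :=
  mul_nonneg (rpow_nonneg hu _) (exp_pos _).le

lemma lowerGamma_nonneg (x : ℝ) : 0 ≤ lowerGamma s x :=
  setIntegral_nonneg measurableSet_Ioo fun _ hu => gammaIntegrand_nonneg hu.1.le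

lemma upperGamma_nonneg {x : ℝ} (hx : 0 ≤ x) : 0 ≤ upperGamma s x :=
  setIntegral_nonneg measurableSet_Ioi fun _ hu => gammaIntegrand_nonneg (hx.trans hu.le)

lemma gammaIntegrand_nonneg_ae_Ioi {x : ℝ} (hx : 0 ≤ x) :
    0 ≤ᵐ[volume.restrict (Ioi x)] fun u : ℝ => u ^ (s - 1) * exp (-u) :=
  (ae_restrict_iff' measurableSet_Ioi).2 <| ae_of_all _ fun _ hu =>
    gammaIntegrand_nonneg (hx.trans hu.le)

lemma upperGamma_pos (hs : 0 < s) {x : ℝ} (hx : 0 ≤ x) : 0 < upperGamma s x := by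
  rw [upperGamma, setIntegral_pos_iff_support_of_nonneg_ae (gammaIntegrand_nonneg_ae_Ioi hx)
    ((integrableOn_gammaIntegrand_Ioi hs).mono_set (Ioi_subset_Ioi hx))]
  have hsupport : Ioi x ⊆ Function.support (fun u : ℝ => u ^ (s - 1) * exp (-u)) ∩ Ioi x :=
    fun u hu => ⟨(mul_pos (rpow_pos_of_pos (hx.trans_lt hu) _) (exp_pos _)).ne', hu⟩
  refine lt_of_lt_of_le ?_ (measure_mono hsupport)
  simp [volume_Ioi]

lemma upperGamma_le_upperGamma (hs : 0 < s) {x y : ℝ} (hx : 0 ≤ x) (hxy : x ≤ y) :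
    upperGamma s y ≤ upperGamma s x :=
  setIntegral_mono_set ((integrableOn_gammaIntegrand_Ioi hs).mono_set (Ioi_subset_Ioi hx))
    (gammaIntegrand_nonneg_ae_Ioi hx) (Ioi_subset_Ioi hxy).eventuallyLE

lemma upperGamma_le_exp_neg (hs : 0 < s) (hs₁ : s ≤ 1) {x : ℝ} (hx : 1 ≤ x) :
    upperGamma s x ≤ exp (-x) := by
  calc upperGamma s x ≤ ∫ u in Ioi x, exp (-u) := by
        refine setIntegral_mono_on
          ((integrableOn_gammaIntegrand_Ioi hs).mono_set (Ioi_subset_Ioi (by linarith)))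
          (by simpa using exp_neg_integrableOn_Ioi x one_pos) measurableSet_Ioi fun u hu => ?_
        have hu : 1 ≤ u := hx.trans hu.le
        exact mul_le_of_le_one_left (exp_pos _).le
          (rpow_le_one_of_one_le_of_nonpos hu (by linarith))
    _ = exp (-x) := integral_exp_neg_Ioi x

lemma tendsto_lowerGamma_atTop (hs : 0 < s) :
    Tendsto (lowerGamma s) atTop (𝓝 (Gamma s)) := by
  have hGamma : Gamma s = ∫ u in Ioi (0 : ℝ), u ^ (s - 1) * exp (-u) := by
    rw [Gamma_eq_integral hs]
    exact setIntegral_congr_fun measurableSet_Ioi fun _ _ => mul_comm _ _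
  rw [hGamma]
  refine (intervalIntegral_tendsto_integral_Ioi 0 (integrableOn_gammaIntegrand_Ioi hs)
    tendsto_id).congr' ?_
  filter_upwards [eventually_ge_atTop 0] with x hx
  rw [id, intervalIntegral.integral_of_le hx, integral_Ioc_eq_integral_Ioo, lowerGamma]

lemma tendsto_abs_cocompact_atTop : Tendsto (fun φ : ℝ => |φ|) (cocompact ℝ) atTop :=
  tendsto_norm_cocompact_atTop

lemma tendsto_lowerGamma_sq_half_cocompact (hs : 0 < s) :
    Tendsto (fun φ : ℝ => lowerGamma s (φ ^ 2 / 2)) (cocompact ℝ) (𝓝 (Gamma s)) := by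
  have hsq : Tendsto (fun φ : ℝ => φ ^ 2 / 2) (cocompact ℝ) atTop :=
    (((tendsto_pow_atTop two_ne_zero).comp tendsto_abs_cocompact_atTop).atTop_div_const
      two_pos).congr fun φ => by simp only [Function.comp_apply, sq_abs]
  exact (tendsto_lowerGamma_atTop hs).comp hsq

lemma tendsto_abs_rpow_mul_upperGamma_sq_half_cocompact (hs : 0 < s) (hs₁ : s ≤ 1) (r : ℝ) :
    Tendsto (fun φ : ℝ => |φ| ^ r * upperGamma s (φ ^ 2 / 2)) (cocompact ℝ) (𝓝 0) := by
  refine squeeze_zero' (Eventually.of_forall fun φ =>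
    mul_nonneg (rpow_nonneg (abs_nonneg φ) _) (upperGamma_nonneg (by positivity))) ?_
    (tendsto_rpow_abs_mul_exp_neg_mul_sq_cocompact one_half_pos r)
  filter_upwards [tendsto_abs_cocompact_atTop.eventually_ge_atTop 2] with φ hφ
  have hφ' : 1 ≤ φ ^ 2 / 2 := by nlinarith [sq_abs φ]
  calc |φ| ^ r * upperGamma s (φ ^ 2 / 2) ≤ |φ| ^ r * exp (-(φ ^ 2 / 2)) :=
        mul_le_mul_of_nonneg_left (upperGamma_le_exp_neg hs hs₁ hφ') (by positivity)
    _ = |φ| ^ r * exp (-(1 / 2) * φ ^ 2) := by ring_nf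

end IncompleteGamma

lemma tendsto_div_abs_rpow_nhdsNE_zero {c p : ℝ} (hc : 0 < c) (hp : 0 < p) :
    Tendsto (fun φ : ℝ => c / |φ| ^ p) (𝓝[≠] 0) atTop := by
  simp_rw [div_eq_mul_inv, ← rpow_neg (abs_nonneg _)]
  exact ((tendsto_rpow_neg_nhdsGT_zero (neg_neg_of_pos hp)).comp tendsto_abs_nhdsNE_zero)
    |>.const_mul_atTop hc

lemma div_abs_rpow_le_mExpr {a φ : ℝ} (ha₀ : 0 ≤ a) (ha₁ : a < 1 / 2) (hφ : |φ| ≤ 1) :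
    a * 2 ^ (-a - 1) / sqrt π * upperGamma (1 / 2 - a) (1 / 2) / |φ| ^ (1 - 2 * a)
      ≤ mExpr a φ := by
  have hlower : 0 ≤ a * 2 ^ (a - 1) / (sqrt π * |φ| ^ (1 + 2 * a))
      * lowerGamma (1 / 2 + a) (φ ^ 2 / 2) :=
    mul_nonneg (by positivity) (lowerGamma_nonneg _)
  have hupper : upperGamma (1 / 2 - a) (1 / 2) ≤ upperGamma (1 / 2 - a) (φ ^ 2 / 2) :=
    upperGamma_le_upperGamma (by linarith) (by positivity) (by nlinarith [sq_abs φ, abs_nonneg φ])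
  have hcoeff : 0 ≤ a * 2 ^ (-a - 1) / (sqrt π * |φ| ^ (1 - 2 * a)) := by positivity
  calc a * 2 ^ (-a - 1) / sqrt π * upperGamma (1 / 2 - a) (1 / 2) / |φ| ^ (1 - 2 * a)
      = a * 2 ^ (-a - 1) / (sqrt π * |φ| ^ (1 - 2 * a)) * upperGamma (1 / 2 - a) (1 / 2) := by
        ring
    _ ≤ a * 2 ^ (-a - 1) / (sqrt π * |φ| ^ (1 - 2 * a)) * upperGamma (1 / 2 - a) (φ ^ 2 / 2) :=
        mul_le_mul_of_nonneg_left hupper hcoeff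
    _ ≤ mExpr a φ := by rw [mExpr]; linarith

lemma abs_rpow_mul_mExpr (a : ℝ) {φ : ℝ} (hφ : φ ≠ 0) :
    |φ| ^ (1 + 2 * a) * mExpr a φ
      = a * 2 ^ (a - 1) / sqrt π * lowerGamma (1 / 2 + a) (φ ^ 2 / 2)
        + a * 2 ^ (-a - 1) / sqrt π * (|φ| ^ (4 * a) * upperGamma (1 / 2 - a) (φ ^ 2 / 2)) := by
  have hφ' : 0 < |φ| := abs_pos.2 hφ
  have hsplit : |φ| ^ (1 + 2 * a) = |φ| ^ (1 - 2 * a) * |φ| ^ (4 * a) := by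
    rw [← rpow_add hφ']; ring_nf
  have h₁ : |φ| ^ (1 - 2 * a) ≠ 0 := (rpow_pos_of_pos hφ' _).ne'
  have h₂ : |φ| ^ (4 * a) ≠ 0 := (rpow_pos_of_pos hφ' _).ne'
  rw [mExpr, hsplit]
  field_simp

/-- m_a has a spike at the origin and polynomial tails of order |φ|^{-(1+2a)}. -/
theorem mExpr_spike_and_tail (a : ℝ) (ha : a ∈ Set.Ioo (0:ℝ) (1/2)) :
    Filter.Tendsto (fun φ : ℝ => mExpr a φ) (nhdsWithin 0 {(0:ℝ)}ᶜ) Filter.atTop ∧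
    Filter.Tendsto (fun φ : ℝ => |φ| ^ (1 + 2*a) * mExpr a φ) (Filter.cocompact ℝ)
      (nhds (a * 2 ^ (a - 1) * Real.Gamma (1/2 + a) / Real.sqrt π)) := by
  obtain ⟨ha₀, ha₁⟩ := ha
  constructor
  · have hc : 0 < a * 2 ^ (-a - 1) / sqrt π * upperGamma (1 / 2 - a) (1 / 2) :=
      mul_pos (by positivity) (upperGamma_pos (by linarith) one_half_pos.le)
    refine tendsto_atTop_mono' _ ?_
      (tendsto_div_abs_rpow_nhdsNE_zero hc (p := 1 - 2 * a) (by linarith))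
    have hsmall : ∀ᶠ φ : ℝ in 𝓝[≠] 0, |φ| ≤ 1 :=
      nhdsWithin_le_nhds ((continuous_abs.tendsto' 0 0 abs_zero).eventually_le_const one_pos)
    filter_upwards [hsmall] with φ hφ
    exact div_abs_rpow_le_mExpr ha₀.le ha₁ hφ
  · have hlower := (tendsto_lowerGamma_sq_half_cocompact (s := 1 / 2 + a) (by linarith)).const_mul
      (a * 2 ^ (a - 1) / sqrt π)
    have hupper := (tendsto_abs_rpow_mul_upperGamma_sq_half_cocompact (s := 1 / 2 - a)
      (by linarith) (by linarith) (4 * a)).const_mul (a * 2 ^ (-a - 1) / sqrt π)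
    have hvalue : a * 2 ^ (a - 1) / sqrt π * Gamma (1 / 2 + a) + a * 2 ^ (-a - 1) / sqrt π * 0
        = a * 2 ^ (a - 1) * Gamma (1 / 2 + a) / sqrt π := by ring
    refine (hvalue ▸ hlower.add hupper).congr' ?_
    filter_upwards [tendsto_abs_cocompact_atTop.eventually_gt_atTop 0] with φ hφ
    exact (abs_rpow_mul_mExpr a (abs_pos.1 hφ)).symm
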